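/- arXiv:2605.17238 — 3 statements merged into one kernel-verified Lean document; each statement's English description precedes it below -/
import Mathlib

section
/- Let K ≥ 1, θ_1,…,θ_K ∈ (0,1], nonnegative reals n_1,…,n_K with D := Σ_k n_k θ_k > 0, and nonnegative reals w_1,…,w_K with w_k ≤ n_k. Define S(v) = Σ_k (w_k − n_k vθ_k/(1+vθ_k)), let ṽ ≥ 0 be the unique root of S, and set v̂ = min(ṽ, 1). Then for every v* ∈ (0,1], |S(v*)| ≥ (1/4) · D · |v̂ − v*|. -/
/-!
The score `S v = ∑ₖ (wₖ - nₖ · vθₖ / (1 + vθₖ))` is antitone on `[0, ∞)`, and on `[0, 1]` it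
decreases at rate at least `D / 4`: writing `g x = x / (1 + x)`, one has
`g y - g x = (y - x) / ((1 + x)(1 + y))` with denominator at most `4` when `0 ≤ x, y ≤ 1`.
If `ṽ ≤ 1` then `S v̂ = 0` and the rate bound on `[0, 1]` gives the claim directly; if `ṽ > 1`,
monotonicity gives `S 1 ≥ S ṽ = 0`, so the rate bound between `v*` and `1` suffices.
-/

open Finset Set

lemma div_one_add_sub_div_one_add {x y : ℝ} (hx : 1 + x ≠ 0) (hy : 1 + y ≠ 0) :
    y / (1 + y) - x / (1 + x) = (y - x) / ((1 + x) * (1 + y)) := by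
  field_simp
  ring

lemma div_one_add_le_div_one_add {x y : ℝ} (hx : 0 ≤ x) (hxy : x ≤ y) :
    x / (1 + x) ≤ y / (1 + y) := by
  rw [div_le_div_iff₀ (by linarith) (by linarith)]
  linarith

lemma sub_div_four_le_div_one_add_sub {x y : ℝ} (hx : 0 ≤ x) (hxy : x ≤ y) (hy : y ≤ 1) :
    (y - x) / 4 ≤ y / (1 + y) - x / (1 + x) := by
  rw [div_one_add_sub_div_one_add (by linarith) (by linarith)]
  have hden : (1 + x) * (1 + y) ≤ 4 := by nlinarith
  exact div_le_div_of_nonneg_left (by linarith) (mul_pos (by linarith) (by linarith)) hden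

lemma le_abs_of_clipped_root {S : ℝ → ℝ} {c vtilde vstar : ℝ}
    (hanti : AntitoneOn S (Ici 0))
    (hrate : ∀ a b, 0 ≤ a → a ≤ b → b ≤ 1 → c * (b - a) ≤ S a - S b)
    (hvt : 0 ≤ vtilde) (hroot : S vtilde = 0) (hv0 : 0 ≤ vstar) (hv1 : vstar ≤ 1) :
    c * |min vtilde 1 - vstar| ≤ |S vstar| := by
  rcases le_total vtilde 1 with h | h
  · rw [min_eq_left h]
    rcases le_total vstar vtilde with hle | hle
    · have := hrate vstar vtilde hv0 hle h
      rw [abs_of_nonneg (sub_nonneg.2 hle)]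
      linarith [le_abs_self (S vstar)]
    · have := hrate vtilde vstar hvt hle hv1
      rw [abs_of_nonpos (sub_nonpos.2 hle), neg_sub]
      linarith [neg_abs_le (S vstar)]
  · have hS1 : 0 ≤ S 1 := hroot ▸ hanti (mem_Ici.2 zero_le_one) hvt h
    have := hrate vstar 1 hv0 hv1 le_rfl
    rw [min_eq_right h, abs_of_nonneg (sub_nonneg.2 hv1)]
    linarith [le_abs_self (S vstar)]

section Score

variable {ι : Type*} [Fintype ι] (θ n w : ι → ℝ)

lemma score_sub_score (a b : ℝ) :
    (∑ k, (w k - n k * (a * θ k / (1 + a * θ k)))) -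
        ∑ k, (w k - n k * (b * θ k / (1 + b * θ k))) =
      ∑ k, n k * (b * θ k / (1 + b * θ k) - a * θ k / (1 + a * θ k)) := by
  rw [← sum_sub_distrib]
  exact sum_congr rfl fun k _ => by ring

variable {θ n}

lemma antitoneOn_score (hθ : ∀ k, 0 ≤ θ k) (hn : ∀ k, 0 ≤ n k) :
    AntitoneOn (fun v => ∑ k, (w k - n k * (v * θ k / (1 + v * θ k)))) (Ici 0) := by
  intro a ha b _ hab
  rw [← sub_nonneg, score_sub_score]
  refine sum_nonneg fun k _ => mul_nonneg (hn k) (sub_nonneg.2 ?_)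
  exact div_one_add_le_div_one_add (mul_nonneg ha (hθ k))
    (mul_le_mul_of_nonneg_right hab (hθ k))

lemma quarter_mul_sub_le_score_sub_score (hθ : ∀ k, 0 ≤ θ k) (hθ1 : ∀ k, θ k ≤ 1)
    (hn : ∀ k, 0 ≤ n k) {a b : ℝ} (ha : 0 ≤ a) (hab : a ≤ b) (hb : b ≤ 1) :
    1 / 4 * (∑ k, n k * θ k) * (b - a) ≤
      (∑ k, (w k - n k * (a * θ k / (1 + a * θ k)))) -
        ∑ k, (w k - n k * (b * θ k / (1 + b * θ k))) := by
  rw [score_sub_score, mul_sum, sum_mul]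
  refine sum_le_sum fun k _ => ?_
  have hterm := sub_div_four_le_div_one_add_sub (mul_nonneg ha (hθ k))
    (mul_le_mul_of_nonneg_right hab (hθ k)) (mul_le_one₀ hb (hθ k) (hθ1 k))
  calc 1 / 4 * (n k * θ k) * (b - a) = n k * ((b * θ k - a * θ k) / 4) := by ring
    _ ≤ _ := mul_le_mul_of_nonneg_left hterm (hn k)

end Score

theorem stmt1_general (K : ℕ) (θ n w : Fin K → ℝ)
    (hθ : ∀ k, 0 < θ k ∧ θ k ≤ 1) (hn : ∀ k, 0 ≤ n k)
    (S : ℝ → ℝ)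
    (hS : S = fun v => ∑ k, (w k - n k * (v * θ k / (1 + v * θ k))))
    (vtilde : ℝ) (hvt : 0 ≤ vtilde) (hroot : S vtilde = 0)
    (vhat : ℝ) (hvhat : vhat = min vtilde 1) :
    ∀ vstar : ℝ, 0 < vstar → vstar ≤ 1 →
      |S vstar| ≥ (1 / 4) * (∑ k, n k * θ k) * |vhat - vstar| := by
  intro vstar hv0 hv1
  have hθ0 : ∀ k, 0 ≤ θ k := fun k => (hθ k).1.le
  subst hS hvhat
  exact le_abs_of_clipped_root (antitoneOn_score w hθ0 hn)
    (fun _ _ ha hab hb =>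
      quarter_mul_sub_le_score_sub_score w hθ0 (fun k => (hθ k).2) hn ha hab hb)
    hvt hroot hv0.le hv1

theorem stmt1 (K : ℕ) (hK : 1 ≤ K) (θ n w : Fin K → ℝ)
    (hθ : ∀ k, 0 < θ k ∧ θ k ≤ 1) (hn : ∀ k, 0 ≤ n k)
    (hw : ∀ k, 0 ≤ w k ∧ w k ≤ n k)
    (hD : 0 < ∑ k, n k * θ k)
    (S : ℝ → ℝ)
    (hS : S = fun v => ∑ k, (w k - n k * (v * θ k / (1 + v * θ k))))
    (vtilde : ℝ) (hvt : 0 ≤ vtilde) (hroot : S vtilde = 0)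
    (vhat : ℝ) (hvhat : vhat = min vtilde 1) :
    ∀ vstar : ℝ, 0 < vstar → vstar ≤ 1 →
      |S vstar| ≥ (1 / 4) * (∑ k, n k * θ k) * |vhat - vstar| :=
  stmt1_general K θ n w hθ hn S hS vtilde hvt hroot vhat hvhat
end

section
/- Let N, K be positive integers with K ≤ N, let r_1,…,r_N ≥ 0, and let (α_{i,k}) and (ᾱ_{i,k}) be N×K matrices with nonnegative entries satisfying ᾱ_{i,k} ≥ α_{i,k} for all i, k. Let F be the set of pairs (S, σ) with S ⊆ [N], |S| ≤ K, and σ : S → [K] injective, and define R((S,σ), α) = (Σ_{i∈S} r_i α_{i,σ(i)}) / (1 + Σ_{j∈S} α_{j,σ(j)}). Then max over F of R(·, ᾱ) is at least max over F of R(·, α). -/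
/-!
Dinkelbach's reformulation: `t ≤ R(S, w)` iff `t ≤ ∑_{i ∈ S} (r i - t) w i`. Given `S` with revenue
`t` under `α`, keep only the products with `r i ≥ t`; the right-hand side can only grow, both by
dropping the negative terms and by raising the weights to `ᾱ`. So the pruned assortment earns at
least `t` under `ᾱ`.
-/

open Finset

noncomputable def mnlRevenue {ι : Type*} (S : Finset ι) (r w : ι → ℝ) : ℝ :=
  (∑ i ∈ S, r i * w i) / (1 + ∑ i ∈ S, w i)

section MNL

variable {ι : Type*} {S : Finset ι} {r w w' : ι → ℝ}

theorem le_mnlRevenue_iff (hw : ∀ i ∈ S, 0 ≤ w i) (t : ℝ) :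
    t ≤ mnlRevenue S r w ↔ t ≤ ∑ i ∈ S, (r i - t) * w i := by
  have hpos : 0 < 1 + ∑ i ∈ S, w i := by linarith [sum_nonneg hw]
  have hsplit : ∑ i ∈ S, (r i - t) * w i = ∑ i ∈ S, r i * w i - t * ∑ i ∈ S, w i := by
    rw [mul_sum, ← sum_sub_distrib]
    exact sum_congr rfl fun i _ => by ring
  rw [mnlRevenue, le_div_iff₀ hpos, hsplit]
  constructor <;> intro h <;> linarith

theorem mnlRevenue_le_mnlRevenue_filter (hw : ∀ i ∈ S, 0 ≤ w i) (hww' : ∀ i ∈ S, w i ≤ w' i) :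
    mnlRevenue S r w ≤ mnlRevenue (S.filter fun i => mnlRevenue S r w ≤ r i) r w' := by
  set t := mnlRevenue S r w
  have hw' : ∀ i ∈ S.filter fun i => t ≤ r i, 0 ≤ w' i :=
    fun i hi => (hw i (mem_filter.1 hi).1).trans (hww' i (mem_filter.1 hi).1)
  rw [le_mnlRevenue_iff hw', sum_filter]
  calc t ≤ ∑ i ∈ S, (r i - t) * w i := (le_mnlRevenue_iff hw t).1 le_rfl
    _ ≤ ∑ i ∈ S, if t ≤ r i then (r i - t) * w' i else 0 := by
      refine sum_le_sum fun i hi => ?_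
      split_ifs with hti
      · exact mul_le_mul_of_nonneg_left (hww' i hi) (sub_nonneg.2 hti)
      · exact mul_nonpos_of_nonpos_of_nonneg (by linarith) (hw i hi)

end MNL

theorem stmt6_general (N K : ℕ)
    (r : Fin N → ℝ)
    (α αbar : Fin N → Fin K → ℝ)
    (hα : ∀ i k, 0 ≤ α i k) (hle : ∀ i k, α i k ≤ αbar i k)
    (Feas : Set (Finset (Fin N) × (Fin N → Fin K)))
    (hFeas : Feas = {p | p.1.card ≤ K ∧ Set.InjOn p.2 ↑p.1})
    (R : (Finset (Fin N) × (Fin N → Fin K)) → (Fin N → Fin K → ℝ) → ℝ)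
    (hR : ∀ p β, R p β =
      (∑ i ∈ p.1, r i * β i (p.2 i)) / (1 + ∑ j ∈ p.1, β j (p.2 j))) :
    (⨆ p : Feas, R p.val αbar) ≥ ⨆ p : Feas, R p.val α := by
  have hR' : ∀ p β, R p β = mnlRevenue p.1 r fun i => β i (p.2 i) := hR
  rcases isEmpty_or_nonempty Feas with _ | _
  · simp only [Real.iSup_of_isEmpty, ge_iff_le, le_refl]
  rw [ge_iff_le]
  refine ciSup_mono_of_forall_exists (Set.finite_range fun p : Feas => R p.val αbar).bddAbove ?_
  rintro ⟨⟨S, σ⟩, hp⟩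
  rw [hFeas] at hp
  let S' := S.filter fun i => R (S, σ) α ≤ r i
  have hp' : (S', σ) ∈ Feas := by
    rw [hFeas]
    exact ⟨(card_filter_le _ _).trans hp.1, hp.2.mono (coe_subset.2 (filter_subset _ _))⟩
  refine ⟨⟨(S', σ), hp'⟩, ?_⟩
  simp only [S', hR']
  exact mnlRevenue_le_mnlRevenue_filter (fun i _ => hα _ _) (fun i _ => hle _ _)

theorem stmt6 (N K : ℕ) (hN : 0 < N) (hK0 : 0 < K) (hK : K ≤ N)
    (r : Fin N → ℝ) (hr : ∀ i, 0 ≤ r i)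
    (α αbar : Fin N → Fin K → ℝ)
    (hα : ∀ i k, 0 ≤ α i k) (hle : ∀ i k, α i k ≤ αbar i k)
    (Feas : Set (Finset (Fin N) × (Fin N → Fin K)))
    (hFeas : Feas = {p | p.1.card ≤ K ∧ Set.InjOn p.2 ↑p.1})
    (R : (Finset (Fin N) × (Fin N → Fin K)) → (Fin N → Fin K → ℝ) → ℝ)
    (hR : ∀ p β, R p β =
      (∑ i ∈ p.1, r i * β i (p.2 i)) / (1 + ∑ j ∈ p.1, β j (p.2 j))) :
    (⨆ p : Feas, R p.val αbar) ≥ ⨆ p : Feas, R p.val α :=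
  stmt6_general N K r α αbar hα hle Feas hFeas R hR
end

section
/- Fix r_1,…,r_N ≥ 0 and a nonnegative N×K matrix (α_{i,k}), with F the set of feasible assortment-positioning pairs (S ⊆ [N], |S| ≤ K, σ : S → [K] injective, including the empty assortment). Define G(ρ) = max_{(S,σ)∈F} Σ_{i∈S} (r_i − ρ) α_{i,σ(i)} − ρ for ρ ≥ 0. Then: (a) G is strictly decreasing on [0,∞); (b) ρ₀ ≥ 0 satisfies G(ρ₀) = 0 if and only if ρ₀ = max_{(S,σ)∈F} (Σ_{i∈S} r_i α_{i,σ(i)})/(1 + Σ_{j∈S} α_{j,σ(j)}). -/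
/-!
Writing `A = Σ rᵢ αᵢ` and `B = Σ αᵢ` for an assortment, `G ρ + ρ` is the maximum of the affine
functions `ρ ↦ A - ρ B`, each non-increasing because `B ≥ 0`; hence `G` is strictly decreasing
and has at most one root. For `R` the largest ratio `A / (1 + B)`, every affine function satisfies
`A - R B ≤ R`, with equality at a maximizer of the ratio, so `G R = 0`.
-/

theorem sub_mul_le_iff_div_one_add_le {a b c : ℝ} (hb : 0 ≤ b) :
    a - c * b ≤ c ↔ a / (1 + b) ≤ c := by
  rw [div_le_iff₀ (by positivity), mul_one_add, ← sub_le_iff_le_add', sub_le_comm]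

section Dinkelbach

variable {ι : Type*} [Finite ι] (A B : ι → ℝ)

theorem strictAnti_iSup_sub_mul_sub (hB : ∀ i, 0 ≤ B i) :
    StrictAnti fun ρ : ℝ => (⨆ i, A i - ρ * B i) - ρ := by
  intro x y hxy
  have hsup : (⨆ i, A i - y * B i) ≤ ⨆ i, A i - x * B i :=
    ciSup_mono (Set.finite_range _).bddAbove fun i => by nlinarith [hB i]
  dsimp only
  linarith

theorem iSup_sub_mul_iSup_div_eq [Nonempty ι] (hB : ∀ i, 0 ≤ B i) :
    (⨆ i, A i - (⨆ j, A j / (1 + B j)) * B i) = ⨆ j, A j / (1 + B j) := by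
  set R := ⨆ j, A j / (1 + B j)
  obtain ⟨m, hm⟩ := exists_eq_ciSup_of_finite (f := fun j => A j / (1 + B j))
  have hRm : A m - R * B m = R := by
    have : 1 + B m ≠ 0 := by linarith [hB m]
    rw [show R = A m / (1 + B m) from hm.symm]
    field_simp
    ring
  refine le_antisymm (ciSup_le fun i => ?_) ?_
  · exact (sub_mul_le_iff_div_one_add_le (hB i)).2
      (le_ciSup (f := fun j => A j / (1 + B j)) (Set.finite_range _).bddAbove i)
  · exact le_ciSup_of_le (Set.finite_range _).bddAbove m hRm.ge

end Dinkelbach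

theorem stmt7_general (N K : ℕ) (hK0 : 0 < K)
    (r : Fin N → ℝ)
    (α : Fin N → Fin K → ℝ) (hα : ∀ i k, 0 ≤ α i k)
    (Feas : Set (Finset (Fin N) × (Fin N → Fin K)))
    (hFeas : Feas = {p | p.1.card ≤ K ∧ Set.InjOn p.2 ↑p.1})
    (G : ℝ → ℝ)
    (hG : ∀ ρ, G ρ =
      (⨆ p : Feas, ∑ i ∈ p.val.1, (r i - ρ) * α i (p.val.2 i)) - ρ) :
    StrictAntiOn G (Set.Ici (0 : ℝ)) ∧
      ∀ ρ₀ : ℝ, 0 ≤ ρ₀ →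
        (G ρ₀ = 0 ↔
          ρ₀ = ⨆ p : Feas,
            (∑ i ∈ p.val.1, r i * α i (p.val.2 i)) /
              (1 + ∑ j ∈ p.val.1, α j (p.val.2 j))) := by
  have : Nonempty Feas := ⟨⟨(∅, fun _ => ⟨0, hK0⟩), by simp [hFeas]⟩⟩
  set A : Feas → ℝ := fun p => ∑ i ∈ p.val.1, r i * α i (p.val.2 i)
  set B : Feas → ℝ := fun p => ∑ i ∈ p.val.1, α i (p.val.2 i)
  have hB : ∀ p, 0 ≤ B p := fun p => Finset.sum_nonneg fun i _ => hα _ _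
  have hG' : G = fun ρ => (⨆ p, A p - ρ * B p) - ρ := by
    funext ρ
    simp only [hG, A, B, sub_mul, Finset.sum_sub_distrib, Finset.mul_sum]
  have hanti : StrictAnti G := hG' ▸ strictAnti_iSup_sub_mul_sub A B hB
  have hroot : G (⨆ p, A p / (1 + B p)) = 0 := by
    rw [hG']
    exact sub_eq_zero.2 (iSup_sub_mul_iSup_div_eq A B hB)
  refine ⟨hanti.strictAntiOn _, fun ρ₀ _ => ?_⟩
  rw [← hroot]
  exact hanti.injective.eq_iff

theorem stmt7 (N K : ℕ) (hN : 0 < N) (hK0 : 0 < K)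
    (r : Fin N → ℝ) (hr : ∀ i, 0 ≤ r i)
    (α : Fin N → Fin K → ℝ) (hα : ∀ i k, 0 ≤ α i k)
    (Feas : Set (Finset (Fin N) × (Fin N → Fin K)))
    (hFeas : Feas = {p | p.1.card ≤ K ∧ Set.InjOn p.2 ↑p.1})
    (G : ℝ → ℝ)
    (hG : ∀ ρ, G ρ =
      (⨆ p : Feas, ∑ i ∈ p.val.1, (r i - ρ) * α i (p.val.2 i)) - ρ) :
    StrictAntiOn G (Set.Ici (0 : ℝ)) ∧
      ∀ ρ₀ : ℝ, 0 ≤ ρ₀ →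
        (G ρ₀ = 0 ↔
          ρ₀ = ⨆ p : Feas,
            (∑ i ∈ p.val.1, r i * α i (p.val.2 i)) /
              (1 + ∑ j ∈ p.val.1, α j (p.val.2 j))) :=
  stmt7_general N K hK0 r α hα Feas hFeas G hG
end
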